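/- arXiv:2103.06106 — 2 statements merged into one kernel-verified Lean document; each statement's English description precedes it below -/
import Mathlib

section
/- Let r: [0,∞) → ℝ be a measurable function with |r(s)| ≤ c for all s, let ψ be the cutoff from the second-variation argument (ψ = s on [0,1], 1 on [1,s₀−1], s₀−s on [s₀−1,s₀]), and suppose ∫₀^{s₀} ψ² r ds ≤ (n−1)∫₀^{s₀}|ψ'|² ds for all s₀ > 2. Then ∫₀^{s₀} r(s) ds ≤ 2(n−1) + 2c for all s₀ > 2. -/
/-!
With `ψ = cutoff s₀`, write `r = ψ² r + (1 - ψ²) r`. Since `|ψ'| = 1` on the two end intervals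
of length one and `ψ' = 0` in between, `∫ |ψ'|² = 2`, so the second-variation inequality bounds
the first part by `2 (n - 1)`. The second part vanishes where `ψ = 1`, and on each end interval
`(1 - ψ²) r ≤ c`.
-/

open MeasureTheory Set intervalIntegral

section EqOnIoo

variable {E : Type*} [NormedAddCommGroup E] {f : ℝ → E} {a b : ℝ} {v : E}

theorem intervalIntegrable_of_eqOn_Ioo (hab : a ≤ b) (h : EqOn f (fun _ => v) (Ioo a b)) :
    IntervalIntegrable f volume a b :=
  (intervalIntegrable_iff_integrableOn_Ioo_of_le hab).2 <|
    (integrableOn_const measure_Ioo_lt_top.ne).congr_fun h.symm measurableSet_Ioo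

theorem integral_eq_of_eqOn_Ioo [NormedSpace ℝ E] [CompleteSpace E] (hab : a ≤ b)
    (h : EqOn f (fun _ => v) (Ioo a b)) : ∫ x in a..b, f x = (b - a) • v := by
  rw [integral_of_le hab, integral_Ioc_eq_integral_Ioo, setIntegral_congr_fun measurableSet_Ioo h,
    setIntegral_const, Real.volume_real_Ioo_of_le hab]

end EqOnIoo

def cutoff (s₀ t : ℝ) : ℝ := min t (min 1 (s₀ - t))

section Cutoff

variable {s₀ t : ℝ}

theorem continuous_cutoff : Continuous (cutoff s₀) := by
  unfold cutoff
  fun_prop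

theorem cutoff_of_lt_one (hs₀ : 2 ≤ s₀) (ht : t < 1) : cutoff s₀ t = t :=
  min_eq_left (le_min ht.le (by linarith))

theorem cutoff_of_mem_Icc (ht : t ∈ Icc 1 (s₀ - 1)) : cutoff s₀ t = 1 := by
  rw [cutoff, min_eq_left (by linarith [ht.2] : (1 : ℝ) ≤ s₀ - t), min_eq_right ht.1]

theorem cutoff_of_lt (hs₀ : 2 ≤ s₀) (ht : s₀ - 1 < t) : cutoff s₀ t = s₀ - t := by
  rw [cutoff, min_eq_right (by linarith : s₀ - t ≤ 1), min_eq_right (by linarith)]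

theorem cutoff_mem_Icc (ht : t ∈ Icc 0 s₀) : cutoff s₀ t ∈ Icc 0 1 :=
  ⟨le_min ht.1 (le_min zero_le_one (by linarith [ht.2])), min_le_of_right_le (min_le_left _ _)⟩

theorem deriv_cutoff_of_lt_one (hs₀ : 2 ≤ s₀) (ht : t < 1) : deriv (cutoff s₀) t = 1 := by
  have : cutoff s₀ =ᶠ[nhds t] id :=
    Filter.eventuallyEq_of_mem (isOpen_Iio.mem_nhds ht) fun _ hx => cutoff_of_lt_one hs₀ hx
  rw [this.deriv_eq, deriv_id]

theorem deriv_cutoff_of_mem_Ioo (ht : t ∈ Ioo 1 (s₀ - 1)) : deriv (cutoff s₀) t = 0 := by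
  have : cutoff s₀ =ᶠ[nhds t] fun _ => 1 :=
    Filter.eventuallyEq_of_mem (isOpen_Ioo.mem_nhds ht) fun _ hx =>
      cutoff_of_mem_Icc (Ioo_subset_Icc_self hx)
  rw [this.deriv_eq, deriv_const]

theorem deriv_cutoff_of_lt (hs₀ : 2 ≤ s₀) (ht : s₀ - 1 < t) : deriv (cutoff s₀) t = -1 := by
  have : cutoff s₀ =ᶠ[nhds t] fun x => s₀ - x :=
    Filter.eventuallyEq_of_mem (isOpen_Ioi.mem_nhds ht) fun _ hx => cutoff_of_lt hs₀ hx
  rw [this.deriv_eq, deriv_const_sub, deriv_id'']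

theorem integral_sq_abs_deriv_cutoff (hs₀ : 2 ≤ s₀) :
    ∫ t in (0 : ℝ)..s₀, |deriv (cutoff s₀) t| ^ 2 = 2 := by
  have h₁ : EqOn (fun t => |deriv (cutoff s₀) t| ^ 2) (fun _ => 1) (Ioo 0 1) := fun t ht => by
    simp [deriv_cutoff_of_lt_one hs₀ ht.2]
  have h₂ : EqOn (fun t => |deriv (cutoff s₀) t| ^ 2) (fun _ => 0) (Ioo 1 (s₀ - 1)) :=
    fun t ht => by simp [deriv_cutoff_of_mem_Ioo ht]
  have h₃ : EqOn (fun t => |deriv (cutoff s₀) t| ^ 2) (fun _ => 1) (Ioo (s₀ - 1) s₀) :=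
    fun t ht => by simp [deriv_cutoff_of_lt hs₀ ht.1]
  have i₁ := intervalIntegrable_of_eqOn_Ioo zero_le_one h₁
  have i₂ := intervalIntegrable_of_eqOn_Ioo (by linarith) h₂
  have i₃ := intervalIntegrable_of_eqOn_Ioo (by linarith) h₃
  rw [← integral_add_adjacent_intervals i₁ (i₂.trans i₃), ← integral_add_adjacent_intervals i₂ i₃,
    integral_eq_of_eqOn_Ioo zero_le_one h₁, integral_eq_of_eqOn_Ioo (by linarith) h₂,
    integral_eq_of_eqOn_Ioo (by linarith) h₃]
  simp only [smul_eq_mul]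
  ring

end Cutoff

section Remainder

variable {s₀ : ℝ} {r : ℝ → ℝ} {c : ℝ}

theorem one_sub_sq_cutoff_mul_le {t x : ℝ} (ht : t ∈ Icc 0 s₀) (hx : |x| ≤ c) :
    (1 - cutoff s₀ t ^ 2) * x ≤ c := by
  obtain ⟨h₀, h₁⟩ := cutoff_mem_Icc ht
  have hw₀ : 0 ≤ 1 - cutoff s₀ t ^ 2 := by nlinarith
  calc (1 - cutoff s₀ t ^ 2) * x ≤ (1 - cutoff s₀ t ^ 2) * c :=
        mul_le_mul_of_nonneg_left (le_of_abs_le hx) hw₀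
    _ ≤ c := by nlinarith [(abs_nonneg x).trans hx]

theorem intervalIntegrable_one_sub_sq_cutoff_mul (hr : ∀ a b, IntervalIntegrable r volume a b)
    (a b : ℝ) : IntervalIntegrable (fun t => (1 - cutoff s₀ t ^ 2) * r t) volume a b :=
  (hr a b).continuousOn_mul (continuous_const.sub (continuous_cutoff.pow 2)).continuousOn

theorem integral_one_sub_sq_cutoff_mul_le (hs₀ : 2 ≤ s₀)
    (hr : ∀ a b, IntervalIntegrable r volume a b) (hbd : ∀ t, |r t| ≤ c) :
    ∫ t in (0 : ℝ)..s₀, (1 - cutoff s₀ t ^ 2) * r t ≤ 2 * c := by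
  have hi := intervalIntegrable_one_sub_sq_cutoff_mul (s₀ := s₀) hr
  have outer : ∀ a b, 0 ≤ a → a ≤ b → b ≤ s₀ →
      ∫ t in a..b, (1 - cutoff s₀ t ^ 2) * r t ≤ (b - a) * c := fun a b ha hab hb => by
    simpa using integral_mono_on hab (hi a b) intervalIntegrable_const fun t ht =>
      one_sub_sq_cutoff_mul_le ⟨ha.trans ht.1, ht.2.trans hb⟩ (hbd t)
  have middle : ∫ t in (1 : ℝ)..(s₀ - 1), (1 - cutoff s₀ t ^ 2) * r t = 0 := by
    rw [integral_eq_of_eqOn_Ioo (v := 0) (by linarith) fun t ht => by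
      simp [cutoff_of_mem_Icc (Ioo_subset_Icc_self ht)], smul_zero]
  rw [← integral_add_adjacent_intervals (hi 0 1) ((hi 1 (s₀ - 1)).trans (hi (s₀ - 1) s₀)),
    ← integral_add_adjacent_intervals (hi 1 (s₀ - 1)) (hi (s₀ - 1) s₀), middle]
  linarith [outer 0 1 le_rfl zero_le_one (by linarith),
    outer (s₀ - 1) s₀ (by linarith) (by linarith) le_rfl]

end Remainder

theorem second_variation_integral_bound_general
    (n : ℕ) (c : ℝ)
    (r : ℝ → ℝ) (hmeas : Measurable r) (hbd : ∀ s, |r s| ≤ c)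
    (hsv : ∀ s₀ > (2:ℝ),
      (∫ s in (0:ℝ)..s₀, (min s (min 1 (s₀ - s)))^2 * r s) ≤
        (n - 1) * ∫ s in (0:ℝ)..s₀,
          |deriv (fun t => min t (min 1 (s₀ - t))) s| ^ 2) :
    ∀ s₀ > (2:ℝ), (∫ s in (0:ℝ)..s₀, r s) ≤ 2 * (n - 1) + 2 * c := by
  intro s₀ hs₀
  have hr : ∀ a b, IntervalIntegrable r volume a b := fun a b =>
    intervalIntegrable_const.mono_fun' hmeas.aestronglyMeasurable (ae_of_all _ hbd)
  have hψ : ∫ t in (0 : ℝ)..s₀, cutoff s₀ t ^ 2 * r t ≤ (n - 1) * 2 := by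
    rw [← integral_sq_abs_deriv_cutoff hs₀.le]
    exact hsv s₀ hs₀
  have hsplit : ∫ t in (0 : ℝ)..s₀, r t = (∫ t in (0 : ℝ)..s₀, cutoff s₀ t ^ 2 * r t) +
      ∫ t in (0 : ℝ)..s₀, (1 - cutoff s₀ t ^ 2) * r t := by
    have hψ_cont : Continuous fun t => cutoff s₀ t ^ 2 := continuous_cutoff.pow 2
    rw [← integral_add ((hr 0 s₀).continuousOn_mul hψ_cont.continuousOn)
      (intervalIntegrable_one_sub_sq_cutoff_mul (s₀ := s₀) hr 0 s₀)]
    congr 1 with t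
    ring
  linarith [integral_one_sub_sq_cutoff_mul_le hs₀.le hr hbd]

/-- If |r| ≤ c and the second-variation inequality
∫₀^{s₀} ψ² r ≤ (n−1) ∫₀^{s₀} |ψ'|² holds for the standard cutoff
ψ(s) = min(s, min(1, s₀−s)) for all s₀ > 2, then
∫₀^{s₀} r ≤ 2(n−1) + 2c for all s₀ > 2. -/
theorem second_variation_integral_bound
    (n : ℕ) (hn : 2 ≤ n) (c : ℝ) (hc : 0 ≤ c)
    (r : ℝ → ℝ) (hmeas : Measurable r) (hbd : ∀ s, |r s| ≤ c)
    (hsv : ∀ s₀ > (2:ℝ),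
      (∫ s in (0:ℝ)..s₀, (min s (min 1 (s₀ - s)))^2 * r s) ≤
        (n - 1) * ∫ s in (0:ℝ)..s₀,
          |deriv (fun t => min t (min 1 (s₀ - t))) s| ^ 2) :
    ∀ s₀ > (2:ℝ), (∫ s in (0:ℝ)..s₀, r s) ≤ 2 * (n - 1) + 2 * c :=
  second_variation_integral_bound_general n c r hmeas hbd hsv
end

section
/- Suppose f > 0 is smooth with Δf ≥ n/2 + nR/(2(n−1)) − R, |∇f|² ≤ 2(f − f₀) with f₀ = min f ≥ 0, and R ≤ k < (n−1)(n−4)/(n−2) where n > 4. Then for a = (n−4)/4 − k(n−2)/(4(n−1)) > 0, the function f^{−a} is superharmonic: Δ(f^{−a}) ≤ 0. -/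
/-- The Laplacian of a function on Euclidean space: the trace of the Hessian. -/
noncomputable def laplacian {n : ℕ} (f : EuclideanSpace ℝ (Fin n) → ℝ)
    (x : EuclideanSpace ℝ (Fin n)) : ℝ :=
  ∑ i : Fin n, iteratedFDeriv ℝ 2 f x (fun _ => EuclideanSpace.single i (1:ℝ))

/-- Chain rule for the Laplacian of `f ^ (-a)`. -/
theorem lap_rpow {n : ℕ} (f : EuclideanSpace ℝ (Fin n) → ℝ) (hf : ContDiff ℝ (⊤ : ℕ∞) f)
    (hfpos : ∀ x, 0 < f x) (a : ℝ) (x : EuclideanSpace ℝ (Fin n)) :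
    laplacian (fun y => f y ^ (-a)) x
      = (-a * (-a-1) * f x ^ (-a-1-1)) * ‖gradient f x‖ ^ 2
        + (-a * f x ^ (-a-1)) * laplacian f x := by
  have hdf : ∀ y, HasFDerivAt f (fderiv ℝ f y) y :=
    fun y => (hf.differentiable (by simp) y).hasFDerivAt
  have h1 : ∀ y, HasFDerivAt (fun y => f y ^ (-a))
      ((-a * f y ^ (-a-1)) • fderiv ℝ f y) y := by
    intro y
    have := (Real.hasDerivAt_rpow_const (x := f y) (p := -a)
      (Or.inl (hfpos y).ne')).comp_hasFDerivAt y (hdf y)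
    simpa [Function.comp_def, sub_eq_add_neg] using this
  have h2 : fderiv ℝ (fun y => f y ^ (-a)) = fun y => (-a * f y ^ (-a-1)) • fderiv ℝ f y :=
    funext fun y => (h1 y).fderiv
  -- derivative of the coefficient
  have hc : HasFDerivAt (fun y => -a * f y ^ (-a-1))
      ((-a * ((-a-1) * f x ^ (-a-1-1))) • fderiv ℝ f x) x := by
    have hb : HasDerivAt (fun t : ℝ => -a * t ^ (-a-1))
        (-a * ((-a-1) * f x ^ (-a-1-1))) (f x) := by
      exact (Real.hasDerivAt_rpow_const (x := f x) (p := -a-1)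
        (Or.inl (hfpos x).ne')).const_mul (-a)
    simpa [Function.comp_def] using hb.comp_hasFDerivAt x (hdf x)
  have hu : HasFDerivAt (fderiv ℝ f) (fderiv ℝ (fderiv ℝ f) x) x := by
    exact (((hf.fderiv_right (m := (⊤ : ℕ∞)) (by simp)).differentiable (by simp)) x).hasFDerivAt
  have h3 := hc.smul hu
  have h4 : fderiv ℝ (fderiv ℝ (fun y => f y ^ (-a))) x
      = (-a * f x ^ (-a-1)) • fderiv ℝ (fderiv ℝ f) x
        + ((-a * ((-a-1) * f x ^ (-a-1-1))) • fderiv ℝ f x).smulRight (fderiv ℝ f x) := by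
    rw [h2]; exact h3.fderiv
  have key : ∀ v : EuclideanSpace ℝ (Fin n),
      iteratedFDeriv ℝ 2 (fun y => f y ^ (-a)) x (fun _ => v)
        = (-a * f x ^ (-a-1)) * (fderiv ℝ (fderiv ℝ f) x v v)
          + (-a * (-a-1) * f x ^ (-a-1-1)) * (fderiv ℝ f x v) * (fderiv ℝ f x v) := by
    intro v
    rw [iteratedFDeriv_two_apply, h4]
    simp only [ContinuousLinearMap.add_apply, ContinuousLinearMap.smul_apply,
      ContinuousLinearMap.smulRight_apply, smul_eq_mul]
    ring
  have hgrad : ∀ v : EuclideanSpace ℝ (Fin n), fderiv ℝ f x v = inner ℝ (gradient f x) v := by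
    intro v
    rw [gradient]
    exact (InnerProductSpace.toDual_symm_apply).symm
  have hsum : ∑ i : Fin n, (fderiv ℝ f x (EuclideanSpace.single i (1:ℝ)))^2
      = ‖gradient f x‖ ^ 2 := by
    have : ∀ i : Fin n, fderiv ℝ f x (EuclideanSpace.single i (1:ℝ)) = gradient f x i := by
      intro i
      rw [hgrad, real_inner_comm, EuclideanSpace.inner_single_left]
      simp
    simp_rw [this]
    rw [EuclideanSpace.norm_eq, Real.sq_sqrt (by positivity)]
    simp [sq_abs]
  have hlapf : ∑ i : Fin n, (iteratedFDeriv ℝ 2 f x) (fun _ => EuclideanSpace.single i (1:ℝ)) = ∑ i : Fin n,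
      fderiv ℝ (fderiv ℝ f) x (EuclideanSpace.single i (1:ℝ)) (EuclideanSpace.single i (1:ℝ)) := by
    congr 1; funext i
    rw [iteratedFDeriv_two_apply]
  unfold laplacian
  simp_rw [key]
  rw [Finset.sum_add_distrib, hlapf]
  rw [← Finset.mul_sum]
  have : ∑ i : Fin n, (-a * (-a-1) * f x ^ (-a-1-1)) * (fderiv ℝ f x (EuclideanSpace.single i (1:ℝ))) * (fderiv ℝ f x (EuclideanSpace.single i (1:ℝ)))
      = (-a * (-a-1) * f x ^ (-a-1-1)) * ∑ i : Fin n, (fderiv ℝ f x (EuclideanSpace.single i (1:ℝ)))^2 := by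
    rw [Finset.mul_sum]; congr 1; funext i; ring
  rw [this, hsum]; ring

/-- If f > 0 is smooth with Δf ≥ n/2 + nR/(2(n−1)) − R,
|∇f|² ≤ 2(f − f₀) with f₀ = min f ≥ 0, and R ≤ k < (n−1)(n−4)/(n−2), n > 4,
then f^{−a} is superharmonic for a = (n−4)/4 − k(n−2)/(4(n−1)) > 0. -/
theorem shrinking_schouten_superharmonic {n : ℕ} (hn : 4 < n)
    (f R : EuclideanSpace ℝ (Fin n) → ℝ) (hf : ContDiff ℝ (⊤ : ℕ∞) f)
    (hfpos : ∀ x, 0 < f x) (f₀ : ℝ) (hf₀ : 0 ≤ f₀)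
    (hmin : ∀ x, f₀ ≤ f x)
    (hΔ : ∀ x, laplacian f x ≥ (n : ℝ) / 2 + n * R x / (2 * (n - 1)) - R x)
    (hgrad : ∀ x, ‖gradient f x‖ ^ 2 ≤ 2 * (f x - f₀))
    (k : ℝ) (hk : ∀ x, R x ≤ k) (hkb : k < ((n : ℝ) - 1) * (n - 4) / (n - 2))
    (a : ℝ) (ha : a = ((n : ℝ) - 4) / 4 - k * (n - 2) / (4 * (n - 1)))
    (hapos : 0 < a) :
    ∀ x, laplacian (fun y => f y ^ (-a)) x ≤ 0 := by
  intro x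
  rw [lap_rpow f hf hfpos a x]
  have hu : 0 < f x := hfpos x
  have hn5 : (5:ℝ) ≤ (n:ℝ) := by exact_mod_cast hn
  have hc : (0:ℝ) < (n:ℝ) - 1 := by linarith
  have hne : ((n:ℝ) - 1) ≠ 0 := ne_of_gt hc
  have hB : 2*a + 2 ≤ laplacian f x := by
    have h := hΔ x
    have hRk := hk x
    have e1 : (n:ℝ) * R x / (2*((n:ℝ)-1)) - R x = -(R x * (((n:ℝ)-2)/(2*((n:ℝ)-1)))) := by
      field_simp; ring
    have e2 : 2*a + 2 = (n:ℝ)/2 - k*(((n:ℝ)-2)/(2*((n:ℝ)-1))) := by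
      rw [ha]; field_simp; ring
    have e3 : (0:ℝ) ≤ ((n:ℝ)-2)/(2*((n:ℝ)-1)) := div_nonneg (by linarith) (by linarith)
    have e4 := mul_le_mul_of_nonneg_right hRk e3
    rw [ge_iff_le] at h
    linarith [h, e4, e2, e1]
  have p1 : (0:ℝ) < f x ^ (-a-1) := Real.rpow_pos_of_pos hu _
  have p2 : (0:ℝ) < f x ^ (-a-1-1) := Real.rpow_pos_of_pos hu _
  have pe : f x ^ (-a-1-1) * f x = f x ^ (-a-1) := by
    have h := Real.rpow_add hu (-a-1-1) 1
    rw [Real.rpow_one] at h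
    rw [← h]
    congr 1
    ring
  have hG0 : (0:ℝ) ≤ ‖gradient f x‖ ^ 2 := sq_nonneg _
  have hGf : ‖gradient f x‖ ^ 2 ≤ 2 * f x := by
    have := hgrad x; linarith [hmin x]
  have h1' : (-a*(-a-1)) * f x ^ (-a-1-1) * ‖gradient f x‖ ^ 2
      ≤ 2*(a*(a+1)) * f x ^ (-a-1) := by
    have hcoef : (0:ℝ) ≤ a*(a+1)*f x^(-a-1-1) := by positivity
    have hm := mul_le_mul_of_nonneg_left hGf hcoef
    calc (-a*(-a-1)) * f x ^ (-a-1-1) * ‖gradient f x‖ ^ 2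
        = a*(a+1)*f x^(-a-1-1) * ‖gradient f x‖ ^ 2 := by ring
      _ ≤ a*(a+1)*f x^(-a-1-1) * (2*f x) := hm
      _ = 2*(a*(a+1))*(f x^(-a-1-1) * f x) := by ring
      _ = 2*(a*(a+1)) * f x ^ (-a-1) := by rw [pe]
  have h2' : (-a) * f x^(-a-1) * laplacian f x ≤ -(a * f x^(-a-1) * (2*a+2)) := by
    have hm := mul_le_mul_of_nonneg_left hB (mul_nonneg hapos.le p1.le)
    nlinarith [hm]
  nlinarith [h1', h2']
end
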